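/- Fix θ ≥ 1, s > 0 and N ≥ 2, and let λ ∈ 𝕐^N be distributed according to the discrete β-ensemble ℙ_N^s with ℓ_i = λ_{N−i+1} + θ·i. Then 𝔼[ ∏_{j=1}^{N−1} (1 + 1/(ℓ_N − ℓ_j))·(1 + (2θ−1)/(ℓ_N − ℓ_j + 1 − θ)) ] = 𝔼[ (ℓ_N/(sθ))·𝟙{ℓ_N > ℓ_{N−1} + θ} ], where 𝟙 denotes the indicator function. -/

import Mathlib

open Filter MeasureTheory

attribute [local instance] Classical.propDecidable

noncomputable section

/-- Partitions with at most `N` parts, as antitone tuples of naturals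
(`l 0 = λ₁` is the largest part). -/
abbrev YoungN (N : ℕ) : Type := {l : Fin N → ℕ // Antitone l}

/-- `ell θ l j = λ_{N-j+1} + θ·j` for `1 ≤ j ≤ N` (junk value `0` otherwise). -/
def ell (θ : ℝ) {N : ℕ} (l : YoungN N) (j : ℕ) : ℝ :=
  if h : 1 ≤ j ∧ j ≤ N then (l.val ⟨N - j, by omega⟩ : ℝ) + θ * j else 0

/-- The weight `W_N^s(λ)` of the discrete β-ensemble. -/
def betaWeight (θ s : ℝ) (N : ℕ) (l : YoungN N) : ℝ :=
  (∏ i ∈ Finset.Icc 1 N, ∏ j ∈ Finset.Icc 1 N,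
    if i < j then
      Real.Gamma (ell θ l j - ell θ l i + 1) * Real.Gamma (ell θ l j - ell θ l i + θ) /
        (Real.Gamma (ell θ l j - ell θ l i) * Real.Gamma (ell θ l j - ell θ l i + 1 - θ))
    else 1) *
  ∏ i ∈ Finset.Icc 1 N, (s * θ) ^ (ell θ l i) / Real.Gamma (ell θ l i + 1)

/-- Expectation under the discrete β-ensemble `ℙ_N^s`. -/
def betaE (θ s : ℝ) (N : ℕ) (f : YoungN N → ℝ) : ℝ :=
  (∑' l : YoungN N, betaWeight θ s N l * f l) / ∑' l : YoungN N, betaWeight θ s N l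

/-- Probability of an event under the discrete β-ensemble `ℙ_N^s`. -/
def betaP (θ s : ℝ) (N : ℕ) (A : YoungN N → Prop) : ℝ :=
  betaE θ s N fun l => if A l then 1 else 0

namespace NekrasovAux

lemma ell_eq {N : ℕ} (θ : ℝ) (l : YoungN N) {j : ℕ} (h1 : 1 ≤ j) (h2 : j ≤ N)
    (k : Fin N) (hk : (k : ℕ) = N - j) : ell θ l j = (l.val k : ℝ) + θ * j := by
  unfold ell
  rw [dif_pos ⟨h1, h2⟩]
  have hkk : (⟨N - j, by omega⟩ : Fin N) = k := Fin.ext hk.symm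
  rw [hkk]

def bump {N : ℕ} (l : YoungN N) : YoungN N :=
  ⟨fun i => if (i : ℕ) = 0 then l.val i + 1 else l.val i, by
    intro i j hij
    have hij' : (i : ℕ) ≤ (j : ℕ) := hij
    have hmono : l.val j ≤ l.val i := l.prop hij
    dsimp only
    split_ifs <;> omega⟩

lemma bump_injective {N : ℕ} : Function.Injective (bump (N := N)) := by
  intro l l' h
  apply Subtype.ext; funext i
  have h2 := congrFun (congrArg Subtype.val h) i
  dsimp only [bump] at h2
  split_ifs at h2 <;> omega

lemma ell_bump_lt {N : ℕ} (θ : ℝ) (l : YoungN N) {j : ℕ} (h1 : 1 ≤ j) (h2 : j < N) :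
    ell θ (bump l) j = ell θ l j := by
  rw [ell_eq θ (bump l) h1 h2.le ⟨N - j, by omega⟩ rfl,
      ell_eq θ l h1 h2.le ⟨N - j, by omega⟩ rfl]
  have hne : ((⟨N - j, by omega⟩ : Fin N) : ℕ) ≠ 0 := by simp; omega
  dsimp only [bump]
  rw [if_neg hne]

lemma ell_bump_top {N : ℕ} (θ : ℝ) (l : YoungN N) (hN : 1 ≤ N) :
    ell θ (bump l) N = ell θ l N + 1 := by
  rw [ell_eq θ (bump l) hN le_rfl ⟨0, by omega⟩ (by simp),
      ell_eq θ l hN le_rfl ⟨0, by omega⟩ (by simp)]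
  dsimp only [bump]
  rw [if_pos rfl]
  push_cast
  ring

lemma ell_diff_ge {N : ℕ} {θ : ℝ} (hθ0 : 0 ≤ θ) (l : YoungN N) {j : ℕ}
    (h1 : 1 ≤ j) (h2 : j < N) : θ ≤ ell θ l N - ell θ l j := by
  rw [ell_eq θ l (by omega) le_rfl ⟨0, by omega⟩ (by simp),
      ell_eq θ l h1 h2.le ⟨N - j, by omega⟩ rfl]
  have hv : l.val ⟨N - j, by omega⟩ ≤ l.val ⟨0, by omega⟩ :=
    l.prop (Fin.mk_le_mk.mpr (Nat.zero_le _))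
  have hv' : (l.val ⟨N - j, by omega⟩ : ℝ) ≤ l.val ⟨0, by omega⟩ := Nat.cast_le.2 hv
  have hj : (j : ℝ) + 1 ≤ (N : ℝ) := by exact_mod_cast h2
  nlinarith [mul_nonneg hθ0 (by linarith : (0:ℝ) ≤ (N : ℝ) - (j : ℝ) - 1)]

lemma ell_top_pos {N : ℕ} {θ : ℝ} (hθ : 0 < θ) (l : YoungN N) (hN : 1 ≤ N) :
    0 < ell θ l N := by
  rw [ell_eq θ l hN le_rfl ⟨0, by omega⟩ (by simp)]
  have h1 : (1 : ℝ) ≤ (N : ℝ) := by exact_mod_cast hN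
  nlinarith [Nat.cast_nonneg (α := ℝ) (l.val ⟨0, by omega⟩)]

lemma gamma_ratio {θ d : ℝ} (hθ : 0 < θ) (hd : 0 < d) (hdθ : 0 < d + 1 - θ) :
    Real.Gamma (d + 1 + 1) * Real.Gamma (d + 1 + θ) /
      (Real.Gamma (d + 1) * Real.Gamma (d + 1 + 1 - θ)) =
    Real.Gamma (d + 1) * Real.Gamma (d + θ) /
        (Real.Gamma d * Real.Gamma (d + 1 - θ)) *
      ((1 + 1 / d) * (1 + (2 * θ - 1) / (d + 1 - θ))) := by
  have h2 : Real.Gamma (d + 1 + 1) = (d + 1) * Real.Gamma (d + 1) :=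
    Real.Gamma_add_one (by positivity)
  have h3 : Real.Gamma (d + 1 + θ) = (d + θ) * Real.Gamma (d + θ) := by
    rw [show d + 1 + θ = (d + θ) + 1 by ring, Real.Gamma_add_one (by positivity)]
  have h4 : Real.Gamma (d + 1 + 1 - θ) = (d + 1 - θ) * Real.Gamma (d + 1 - θ) := by
    rw [show d + 1 + 1 - θ = (d + 1 - θ) + 1 by ring, Real.Gamma_add_one hdθ.ne']
  have h1 : Real.Gamma (d + 1) = d * Real.Gamma d := Real.Gamma_add_one hd.ne'
  have g1 : Real.Gamma d ≠ 0 := (Real.Gamma_pos_of_pos hd).ne'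
  have g2 : Real.Gamma (d + 1 - θ) ≠ 0 := (Real.Gamma_pos_of_pos hdθ).ne'
  have g3 : Real.Gamma (d + θ) ≠ 0 := (Real.Gamma_pos_of_pos (by positivity)).ne'
  rw [h2, h3, h4, h1]
  field_simp
  ring

set_option maxHeartbeats 1000000 in
lemma weight_bump (θ s : ℝ) (hθ : 1 ≤ θ) (hs : 0 < s) (M : ℕ) (hM : 1 ≤ M)
    (l : YoungN (M + 1)) :
    betaWeight θ s (M + 1) l *
        (∏ j ∈ Finset.Icc 1 M,
          (1 + 1 / (ell θ l (M + 1) - ell θ l j)) *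
            (1 + (2 * θ - 1) / (ell θ l (M + 1) - ell θ l j + 1 - θ))) =
      betaWeight θ s (M + 1) (bump l) * ((ell θ l (M + 1) + 1) / (s * θ)) := by
  have hθ0 : (0:ℝ) < θ := lt_of_lt_of_le one_pos hθ
  set r : ℕ → ℝ := fun i =>
    (1 + 1 / (ell θ l (M + 1) - ell θ l i)) *
      (1 + (2 * θ - 1) / (ell θ l (M + 1) - ell θ l i + 1 - θ)) with hr
  have hd : ∀ i, 1 ≤ i → i ≤ M →
      0 < ell θ l (M + 1) - ell θ l i ∧ 0 < ell θ l (M + 1) - ell θ l i + 1 - θ := by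
    intro i h1 h2
    have := ell_diff_ge (le_of_lt hθ0) l h1 (by omega)
    constructor <;> linarith
  unfold betaWeight
  have hP :
      (∏ i ∈ Finset.Icc 1 (M + 1), ∏ j ∈ Finset.Icc 1 (M + 1),
          if i < j then
            Real.Gamma (ell θ (bump l) j - ell θ (bump l) i + 1) *
                Real.Gamma (ell θ (bump l) j - ell θ (bump l) i + θ) /
              (Real.Gamma (ell θ (bump l) j - ell θ (bump l) i) *
                Real.Gamma (ell θ (bump l) j - ell θ (bump l) i + 1 - θ))
          else 1) =
        (∏ i ∈ Finset.Icc 1 (M + 1), ∏ j ∈ Finset.Icc 1 (M + 1),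
            if i < j then
              Real.Gamma (ell θ l j - ell θ l i + 1) * Real.Gamma (ell θ l j - ell θ l i + θ) /
                (Real.Gamma (ell θ l j - ell θ l i) * Real.Gamma (ell θ l j - ell θ l i + 1 - θ))
            else 1) *
          ∏ i ∈ Finset.Icc 1 M, r i := by
    have inner : ∀ i ∈ Finset.Icc 1 (M + 1),
        (∏ j ∈ Finset.Icc 1 (M + 1),
            if i < j then
              Real.Gamma (ell θ (bump l) j - ell θ (bump l) i + 1) *
                  Real.Gamma (ell θ (bump l) j - ell θ (bump l) i + θ) /
                (Real.Gamma (ell θ (bump l) j - ell θ (bump l) i) *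
                  Real.Gamma (ell θ (bump l) j - ell θ (bump l) i + 1 - θ))
            else 1) =
          (∏ j ∈ Finset.Icc 1 (M + 1),
              if i < j then
                Real.Gamma (ell θ l j - ell θ l i + 1) * Real.Gamma (ell θ l j - ell θ l i + θ) /
                  (Real.Gamma (ell θ l j - ell θ l i) * Real.Gamma (ell θ l j - ell θ l i + 1 - θ))
              else 1) * (if i ≤ M then r i else 1) := by
      intro i hi
      obtain ⟨hi1, hi2⟩ := Finset.mem_Icc.mp hi
      rw [Finset.prod_Icc_succ_top (by omega), Finset.prod_Icc_succ_top (by omega)]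
      have hmid : ∀ j ∈ Finset.Icc 1 M,
          (if i < j then
              Real.Gamma (ell θ (bump l) j - ell θ (bump l) i + 1) *
                  Real.Gamma (ell θ (bump l) j - ell θ (bump l) i + θ) /
                (Real.Gamma (ell θ (bump l) j - ell θ (bump l) i) *
                  Real.Gamma (ell θ (bump l) j - ell θ (bump l) i + 1 - θ))
            else 1) =
          (if i < j then
              Real.Gamma (ell θ l j - ell θ l i + 1) * Real.Gamma (ell θ l j - ell θ l i + θ) /
                (Real.Gamma (ell θ l j - ell θ l i) * Real.Gamma (ell θ l j - ell θ l i + 1 - θ))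
            else 1) := by
        intro j hj
        obtain ⟨hj1, hj2⟩ := Finset.mem_Icc.mp hj
        by_cases hij : i < j
        · rw [ell_bump_lt θ l hj1 (by omega), ell_bump_lt θ l (by omega) (by omega)]
        · simp [hij]
      rw [Finset.prod_congr rfl hmid]
      by_cases hiM : i ≤ M
      · rw [if_pos (show i < M + 1 by omega), if_pos (show i < M + 1 by omega), if_pos hiM]
        have hdiff : ell θ (bump l) (M + 1) - ell θ (bump l) i =
            ell θ l (M + 1) - ell θ l i + 1 := by
          rw [ell_bump_top θ l (by omega), ell_bump_lt θ l hi1 (by omega)]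
          ring
        rw [hdiff]
        obtain ⟨hd1, hd2⟩ := hd i hi1 hiM
        rw [gamma_ratio hθ0 hd1 hd2, hr]
        ring
      · rw [if_neg (show ¬ i < M + 1 by omega), if_neg (show ¬ i < M + 1 by omega),
          if_neg hiM, mul_one]
        exact (mul_one _).symm
    rw [Finset.prod_congr rfl inner, Finset.prod_mul_distrib]
    congr 1
    rw [Finset.prod_Icc_succ_top (f := fun i => if i ≤ M then r i else 1) (by omega),
      if_neg (by omega), mul_one]
    exact Finset.prod_congr rfl (fun i hi => if_pos (Finset.mem_Icc.mp hi).2)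
  have hE : 0 < ell θ l (M + 1) := ell_top_pos hθ0 l (by omega)
  have hsθ : s * θ ≠ 0 := by positivity
  have hQ :
      (∏ i ∈ Finset.Icc 1 (M + 1),
          (s * θ) ^ (ell θ (bump l) i) / Real.Gamma (ell θ (bump l) i + 1)) =
        (∏ i ∈ Finset.Icc 1 (M + 1),
            (s * θ) ^ (ell θ l i) / Real.Gamma (ell θ l i + 1)) *
          (s * θ / (ell θ l (M + 1) + 1)) := by
    rw [Finset.prod_Icc_succ_top (by omega), Finset.prod_Icc_succ_top (by omega)]
    have hmid : ∀ i ∈ Finset.Icc 1 M,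
        (s * θ) ^ (ell θ (bump l) i) / Real.Gamma (ell θ (bump l) i + 1) =
          (s * θ) ^ (ell θ l i) / Real.Gamma (ell θ l i + 1) := by
      intro i hi
      obtain ⟨h1, h2⟩ := Finset.mem_Icc.mp hi
      rw [ell_bump_lt θ l h1 (by omega)]
    rw [Finset.prod_congr rfl hmid, ell_bump_top θ l (by omega)]
    rw [Real.rpow_add_one hsθ,
      Real.Gamma_add_one (by linarith : ell θ l (M + 1) + 1 ≠ 0)]
    have hΓ : Real.Gamma (ell θ l (M + 1) + 1) ≠ 0 :=
      (Real.Gamma_pos_of_pos (by linarith)).ne'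
    have hE1 : ell θ l (M + 1) + 1 ≠ 0 := by linarith
    field_simp
  have hE1 : ell θ l (M + 1) + 1 ≠ 0 := by linarith
  have final : ∀ A B R E : ℝ, E + 1 ≠ 0 →
      A * B * R = A * R * (B * (s * θ / (E + 1))) * ((E + 1) / (s * θ)) := by
    intro A B R E hE'
    field_simp
  rw [hP, hQ]
  exact final _ _ _ _ hE1


end NekrasovAux

open NekrasovAux in
/-- Lemma 5.5, second identity: under the discrete β-ensemble `ℙ_N^s`,
`𝔼[∏_{j=1}^{N-1} (1 + 1/(ℓ_N - ℓ_j))(1 + (2θ-1)/(ℓ_N - ℓ_j + 1 - θ))]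
  = 𝔼[(ℓ_N/(sθ)) 𝟙{ℓ_N > ℓ_{N-1} + θ}]`. -/
theorem nekrasov_identity_up
    (θ s : ℝ) (hθ : 1 ≤ θ) (hs : 0 < s) (N : ℕ) (hN : 2 ≤ N) :
    betaE θ s N (fun l =>
      ∏ j ∈ Finset.Icc 1 (N - 1),
        (1 + 1 / (ell θ l N - ell θ l j)) *
          (1 + (2 * θ - 1) / (ell θ l N - ell θ l j + 1 - θ))) =
    betaE θ s N (fun l =>
      ell θ l N / (s * θ) * (if ell θ l (N - 1) + θ < ell θ l N then 1 else 0)) := by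
  obtain ⟨M, rfl⟩ : ∃ M, N = M + 1 := ⟨N - 1, by omega⟩
  have hM : 1 ≤ M := by omega
  have hθ0 : (0:ℝ) < θ := lt_of_lt_of_le one_pos hθ
  simp only [Nat.add_sub_cancel]
  unfold betaE
  congr 1
  have key : ∀ l : YoungN (M + 1),
      betaWeight θ s (M + 1) l *
          (∏ j ∈ Finset.Icc 1 M,
            (1 + 1 / (ell θ l (M + 1) - ell θ l j)) *
              (1 + (2 * θ - 1) / (ell θ l (M + 1) - ell θ l j + 1 - θ))) =
        betaWeight θ s (M + 1) (bump l) *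
          (ell θ (bump l) (M + 1) / (s * θ) *
            (if ell θ (bump l) M + θ < ell θ (bump l) (M + 1) then 1 else 0)) := by
    intro l
    have hind : ell θ (bump l) M + θ < ell θ (bump l) (M + 1) := by
      rw [ell_bump_top θ l (by omega), ell_bump_lt θ l hM (by omega),
        ell_eq θ l hM (by omega) ⟨1, by omega⟩ (by simp),
        ell_eq θ l (by omega) le_rfl ⟨0, by omega⟩ (by simp)]
      have hv : l.val ⟨1, by omega⟩ ≤ l.val ⟨0, by omega⟩ :=
        l.prop (Fin.mk_le_mk.mpr (Nat.zero_le _))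
      have hv' : (l.val ⟨1, by omega⟩ : ℝ) ≤ l.val ⟨0, by omega⟩ := Nat.cast_le.2 hv
      push_cast
      linarith
    rw [if_pos hind, mul_one, ell_bump_top θ l (by omega)]
    exact weight_bump θ s hθ hs M hM l
  have hsupp : Function.support (fun μ : YoungN (M + 1) =>
      betaWeight θ s (M + 1) μ *
        (ell θ μ (M + 1) / (s * θ) *
          (if ell θ μ M + θ < ell θ μ (M + 1) then 1 else 0))) ⊆
      Set.range (bump (N := M + 1)) := by
    intro μ hμ
    have hcond : ell θ μ M + θ < ell θ μ (M + 1) := by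
      by_contra h
      apply hμ
      simp only [if_neg h]
      ring
    have h10 : μ.val ⟨1, by omega⟩ < μ.val ⟨0, by omega⟩ := by
      rw [ell_eq θ μ hM (by omega) ⟨1, by omega⟩ (by simp),
        ell_eq θ μ (by omega) le_rfl ⟨0, by omega⟩ (by simp)] at hcond
      push_cast at hcond
      have : (μ.val ⟨1, by omega⟩ : ℝ) < μ.val ⟨0, by omega⟩ := by linarith
      exact_mod_cast this
    refine ⟨⟨fun i => if (i : ℕ) = 0 then μ.val i - 1 else μ.val i, ?_⟩, ?_⟩
    · intro i j hij
      have hij' : (i : ℕ) ≤ (j : ℕ) := hij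
      have hmono : μ.val j ≤ μ.val i := μ.prop hij
      dsimp only
      split_ifs with h1 h2 h2
      · omega
      · omega
      · -- i.1 = 0, j.1 ≠ 0 : need μ j ≤ μ i - 1
        have hj1 : μ.val j ≤ μ.val ⟨1, by omega⟩ :=
          μ.prop (Fin.mk_le_mk.mpr (by omega))
        have hi0 : i = ⟨0, by omega⟩ := Fin.ext h2
        rw [hi0]
        omega
      · exact hmono
    · apply Subtype.ext
      funext i
      dsimp only [bump]
      by_cases h0 : (i : ℕ) = 0
      · have hi0 : i = ⟨0, by omega⟩ := Fin.ext h0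
        simp only [h0, if_pos]
        rw [hi0]
        omega
      · simp only [h0, if_neg, ite_false]
  exact (tsum_congr key).trans (bump_injective.tsum_eq hsupp)


end
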